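/- arXiv:1307.7522 — 3 statements merged into one kernel-verified Lean document; each statement's English description precedes it below -/
import Mathlib

section
/- Let R be a noetherian ring and k a natural number. Assume that Spec(R) is connected and that for every prime ideal p of R with dim(R_p) > k one has depth(R_p) ≥ 2. Then Spec(R) is connected in codimension k. -/
/-!
If `Spec R \ A` splits into disjoint nonempty open pieces `C₁`, `C₂`, their closures cover
`Spec R` (since `codim A > k ≥ 0`, no minimal prime lies in `A`) and, `Spec R` being connected,
they meet; they meet only inside `A`. At a prime `p` minimal in the intersection, the ideals
`𝔞`, `𝔟` of `R_p` cutting out the two closures satisfy `𝔞𝔟 ⊆ √0`, `√(𝔞 + 𝔟) = 𝔪` and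
`𝔞, 𝔟 ⊄ √0`: the punctured spectrum of `R_p` is disconnected. As `dim R_p ≥ height p > k`,
the ring `R_p` has depth `≥ 2`, which such a local ring cannot have. Indeed, after replacing
`𝔞, 𝔟` by powers, `𝔞𝔟 = 0`. For a regular sequence `x, y` in `𝔪` write `x ^ N = c + d` and
`y ^ M = c' + d'` with `c, c' ∈ 𝔞` and `d, d' ∈ 𝔟`. Then `y ^ M * c = x ^ N * c'`, so
`x ^ N ∣ c` because `y` is regular modulo `x`; but `x ^ N ∣ c` forces `x ^ N` into `𝔞` or `𝔟`,
both of which lie in minimal primes and so consist of zero divisors.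
-/


open TopologicalSpace

/-- The chain-theoretic codimension of `A` inside `Y`: the infimum, over all
irreducible closed subsets `Z` of `Y` contained in `A`, of the coheight of `Z`
in the poset of irreducible closed subsets of `Y`. -/
noncomputable def codimIn {α : Type*} [TopologicalSpace α] (Y A : Set α) : ℕ∞ :=
  ⨅ (Z : IrreducibleCloseds ↥Y) (_ : (Z : Set ↥Y) ⊆ (Subtype.val ⁻¹' A)), Order.coheight Z

/-- `Y` is connected in codimension `k`: removing any closed subset of
codimension `> k` leaves a connected set. -/
def ConnectedInCodim {α : Type*} [TopologicalSpace α] (Y : Set α) (k : ℕ∞) : Prop :=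
  ∀ A : Set α, IsClosed A → k < codimIn Y A → IsConnected (Y \ A)

/-- `Z` is an irreducible component of `Y` (a maximal irreducible subset of `Y`). -/
def IsIrredCompOf {α : Type*} [TopologicalSpace α] (Z Y : Set α) : Prop :=
  Maximal (fun S => S ⊆ Y ∧ IsIrreducible S) Z

/-- The depth of a Noetherian local ring: the supremum of the lengths of regular
sequences contained in the maximal ideal. -/
noncomputable def ringDepth (R : Type*) [CommRing R] [IsLocalRing R] : ℕ∞ :=
  ⨆ (rs : List R) (_ : (∀ r ∈ rs, r ∈ IsLocalRing.maximalIdeal R) ∧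
    RingTheory.Sequence.IsRegular R rs), (rs.length : ℕ∞)

/-- The Cohen-Macaulay defect `dim R - depth R` of a Noetherian local ring. -/
noncomputable def cmdefLocal (R : Type*) [CommRing R] [IsLocalRing R] : ℕ∞ :=
  ((ringKrullDim R).unbotD 0 : ℕ∞) - ringDepth R

/-- The Cohen-Macaulay defect of a Noetherian ring: the supremum of the
Cohen-Macaulay defects of its localizations at primes. -/
noncomputable def cmdef (R : Type*) [CommRing R] : ℕ∞ :=
  ⨆ p : PrimeSpectrum R, cmdefLocal (Localization.AtPrime p.asIdeal)

open IsLocalRing PrimeSpectrum Topology Pointwise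

section RegularModulo

variable {S : Type*} [CommRing S] {x y : S}

lemma dvd_of_isSMulRegular_quotSMulTop (h : IsSMulRegular (QuotSMulTop x S) y) {z : S}
    (hz : x ∣ y * z) : x ∣ z := by
  have hspan : x • (⊤ : Submodule S S) = Ideal.span {x} := by
    ext w
    simp [Submodule.mem_smul_pointwise_iff_exists, Ideal.mem_span_singleton', mul_comm]
  have := (isSMulRegular_quotient_iff_mem_of_smul_mem _ y).mp h z
  rw [hspan, smul_eq_mul, Ideal.mem_span_singleton, Ideal.mem_span_singleton] at this
  exact this hz

lemma pow_dvd_of_pow_dvd_mul (hx : IsSMulRegular S x) (hy : ∀ z, x ∣ y * z → x ∣ z) (n : ℕ)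
    {z : S} (hz : x ^ n ∣ y * z) : x ^ n ∣ z := by
  induction n generalizing z with
  | zero => simp
  | succ n ih =>
    obtain ⟨w, hw⟩ := hz
    obtain ⟨z₁, rfl⟩ := hy z ⟨x ^ n * w, by rw [hw]; ring⟩
    have hcancel : y * z₁ = x ^ n * w := hx (by simp only [smul_eq_mul]; linear_combination hw)
    obtain ⟨v, rfl⟩ := ih ⟨w, hcancel⟩
    exact ⟨v, by ring⟩

lemma pow_dvd_of_pow_dvd_pow_mul (hx : IsSMulRegular S x) (hy : ∀ z, x ∣ y * z → x ∣ z)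
    (n m : ℕ) {z : S} (hz : x ^ n ∣ y ^ m * z) : x ^ n ∣ z := by
  induction m with
  | zero => simpa using hz
  | succ m ih => exact ih (pow_dvd_of_pow_dvd_mul hx hy n (by rwa [pow_succ', mul_assoc] at hz))

end RegularModulo

lemma IsSMulRegular.notMem_of_le_minimalPrime {S : Type*} [CommRing S] {t : S}
    (ht : IsSMulRegular S t) {𝔞 : Ideal S} (ha : ∃ p ∈ minimalPrimes S, 𝔞 ≤ p) : t ∉ 𝔞 := by
  obtain ⟨p, hp, hap⟩ := ha
  refine fun h ↦ ht.notMem_of_mem_minimalPrimes ?_ (hap h)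
  rwa [Module.annihilator_eq_bot.mpr inferInstance]

lemma exists_mem_minimalPrimes_ge_of_mul_le_nilradical {R : Type*} [CommRing R]
    {𝔞 𝔟 : Ideal R} (hab : 𝔞 * 𝔟 ≤ nilradical R) (hb : ¬ 𝔟 ≤ nilradical R) :
    ∃ p ∈ minimalPrimes R, 𝔞 ≤ p := by
  rw [nilradical, ← Ideal.sInf_minimalPrimes, le_sInf_iff] at hb hab
  simp only [not_forall] at hb
  obtain ⟨p, hp, hbp⟩ := hb
  exact ⟨p, hp, ((hp.1.1.mul_le).mp (hab p hp)).resolve_right hbp⟩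

section LocalRing

variable {S : Type*} [CommRing S] [IsLocalRing S]

lemma not_add_dvd_left_of_notMem {𝔞 𝔟 : Ideal S} {c d : S} (hc : c ∈ 𝔞) (hd : d ∈ 𝔟)
    (ha : c + d ∉ 𝔞) (hb : c + d ∉ 𝔟) : ¬ c + d ∣ c := by
  rintro ⟨r, hr⟩
  rcases isUnit_or_isUnit_one_sub_self r with ⟨u, rfl⟩ | ⟨u, hu⟩
  · exact ha ((Units.eq_mul_inv_iff_mul_eq u).mpr hr.symm ▸ 𝔞.mul_mem_right _ hc)
  · have hc' : c = d * r * ↑u⁻¹ :=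
      (Units.eq_mul_inv_iff_mul_eq u).mpr (by rw [hu]; linear_combination hr)
    exact hb (𝔟.add_mem (hc' ▸ 𝔟.mul_mem_right _ (𝔟.mul_mem_right _ hd)) hd)

theorem not_isSMulRegular_quotSMulTop_of_mul_eq_bot {𝔞 𝔟 : Ideal S} (hab : 𝔞 * 𝔟 = ⊥)
    (hm : maximalIdeal S ≤ (𝔞 ⊔ 𝔟).radical)
    (ha : ∃ p ∈ minimalPrimes S, 𝔞 ≤ p) (hb : ∃ p ∈ minimalPrimes S, 𝔟 ≤ p)
    {x y : S} (hx : x ∈ maximalIdeal S) (hy : y ∈ maximalIdeal S) (hxreg : IsSMulRegular S x) :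
    ¬ IsSMulRegular (QuotSMulTop x S) y := by
  intro hyreg
  obtain ⟨N, hN⟩ := hm hx
  obtain ⟨c, hc, d, hd, hcd⟩ := Submodule.mem_sup.mp hN
  obtain ⟨M, hM⟩ := hm hy
  obtain ⟨c', hc', d', hd', hcd'⟩ := Submodule.mem_sup.mp hM
  have hzero {a b : S} (ha : a ∈ 𝔞) (hb : b ∈ 𝔟) : a * b = 0 := by
    simpa [hab] using Ideal.mul_mem_mul ha hb
  have hrel : y ^ M * c = x ^ N * c' := by
    rw [← hcd, ← hcd']
    linear_combination hzero hc hd' - hzero hc' hd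
  have hreg : IsSMulRegular S (c + d) := hcd ▸ hxreg.pow N
  refine not_add_dvd_left_of_notMem hc hd (hreg.notMem_of_le_minimalPrime ha)
    (hreg.notMem_of_le_minimalPrime hb) ?_
  rw [hcd]
  exact pow_dvd_of_pow_dvd_pow_mul hxreg (fun z ↦ dvd_of_isSMulRegular_quotSMulTop hyreg) N M
    ⟨c', hrel⟩

lemma ringDepth_le_one_of_forall_not_isSMulRegular (h : ∀ x ∈ maximalIdeal S,
    ∀ y ∈ maximalIdeal S, IsSMulRegular S x → ¬ IsSMulRegular (QuotSMulTop x S) y) :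
    ringDepth S ≤ 1 := by
  refine iSup₂_le fun rs ⟨hmem, hreg⟩ ↦ ?_
  match rs, hmem, hreg with
  | [], _, _ | [_], _, _ => simp
  | x :: y :: _, hmem, hreg =>
    rw [RingTheory.Sequence.isRegular_cons_iff, RingTheory.Sequence.isRegular_cons_iff] at hreg
    exact (h x (hmem x (by simp)) y (hmem y (by simp)) hreg.1 hreg.2.1).elim

theorem ringDepth_le_one_of_mul_le_nilradical [IsNoetherianRing S] {𝔞 𝔟 : Ideal S}
    (hab : 𝔞 * 𝔟 ≤ nilradical S) (hm : maximalIdeal S ≤ (𝔞 ⊔ 𝔟).radical)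
    (ha : ¬ 𝔞 ≤ nilradical S) (hb : ¬ 𝔟 ≤ nilradical S) :
    ringDepth S ≤ 1 := by
  obtain ⟨n, hn⟩ := IsNoetherianRing.isNilpotent_nilradical S
  have hn₀ : n + 1 ≠ 0 := n.succ_ne_zero
  have hminimal {I J : Ideal S} (hIJ : I * J ≤ nilradical S) (hJ : ¬ J ≤ nilradical S) :
      ∃ p ∈ minimalPrimes S, I ^ (n + 1) ≤ p := by
    obtain ⟨p, hp, hIp⟩ := exists_mem_minimalPrimes_ge_of_mul_le_nilradical hIJ hJ
    exact ⟨p, hp, (Ideal.pow_le_self hn₀).trans hIp⟩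
  refine ringDepth_le_one_of_forall_not_isSMulRegular fun x hx y hy hxreg ↦
    not_isSMulRegular_quotSMulTop_of_mul_eq_bot (𝔞 := 𝔞 ^ (n + 1)) (𝔟 := 𝔟 ^ (n + 1)) ?_ ?_
      (hminimal hab hb) (hminimal (mul_comm 𝔞 𝔟 ▸ hab) ha) hx hy hxreg
  · rw [← mul_pow, ← le_bot_iff, ← Ideal.zero_eq_bot, ← zero_mul (nilradical S), ← hn,
      ← pow_succ]
    exact Ideal.pow_right_mono hab _
  · rwa [Ideal.radical_sup, Ideal.radical_pow _ hn₀, Ideal.radical_pow _ hn₀,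
      ← Ideal.radical_sup]

end LocalRing

lemma IsOpen.exists_mem_specializes_of_mem_closure {X : Type*} [TopologicalSpace X]
    [NoetherianSpace X] [QuasiSober X] {C : Set X} (hC : IsOpen C) {p : X}
    (hp : p ∈ closure C) : ∃ c ∈ C, c ⤳ p := by
  obtain ⟨T, hTfin, hTclosed, hTirr, hT⟩ :=
    NoetherianSpace.exists_finite_set_isClosed_irreducible (isClosed_closure (s := C))
  have hcover : C ⊆ ⋃ t ∈ {t ∈ T | (t ∩ C).Nonempty}, t := by
    intro c hc
    obtain ⟨t, ht, hct⟩ := Set.mem_sUnion.mp (hT ▸ subset_closure hc)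
    exact Set.mem_biUnion ⟨ht, c, hct, hc⟩ hct
  have hclosed : IsClosed (⋃ t ∈ {t ∈ T | (t ∩ C).Nonempty}, t) :=
    (hTfin.subset fun _ h ↦ h.1).isClosed_biUnion fun t ht ↦ hTclosed t ht.1
  obtain ⟨t, ⟨ht, hne⟩, hpt⟩ := Set.mem_iUnion₂.mp (closure_minimal hcover hclosed hp)
  have hgen := (hTirr t ht).isGenericPoint_genericPoint (hTclosed t ht)
  exact ⟨_, (hgen.mem_open_set_iff hC).mpr hne, hgen.specializes hpt⟩

section PrimeSpectrum

variable {R : Type*} [CommRing R]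

lemma codimIn_univ_le_height {A : Set (PrimeSpectrum R)} (hA : IsClosed A)
    {p : PrimeSpectrum R} (hp : p ∈ A) : codimIn Set.univ A ≤ Order.height p := by
  let W : IrreducibleCloseds (PrimeSpectrum R) :=
    OrderDual.ofDual (PrimeSpectrum.pointsEquivIrreducibleCloseds R p)
  have hW : (W : Set (PrimeSpectrum R)) = closure {p} := rfl
  let Z : IrreducibleCloseds (Set.univ : Set (PrimeSpectrum R)) :=
    ⟨Subtype.val ⁻¹' W, ⟨⟨⟨p, trivial⟩, show p ∈ (W : Set _) from hW ▸ subset_closure rfl⟩,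
      W.isIrreducible.isPreirreducible.preimage isOpen_univ.isOpenEmbedding_subtypeVal⟩,
      W.isClosed.preimage continuous_subtype_val⟩
  calc codimIn Set.univ A ≤ Order.coheight Z :=
        iInf₂_le Z (Set.preimage_mono (hW ▸ closure_minimal (by simpa) hA))
    _ ≤ Order.coheight (IrreducibleCloseds.map Subtype.val continuous_subtype_val Z) :=
        Order.coheight_le_coheight_apply_of_strictMono _
          (IrreducibleCloseds.map_strictMono_of_isInducing IsInducing.subtypeVal) Z
    _ = Order.coheight W := by
        congr 1
        refine IrreducibleCloseds.ext ?_
        change closure (Subtype.val '' (Subtype.val ⁻¹' (W : Set (PrimeSpectrum R)))) = W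
        rw [Subtype.image_preimage_coe, Set.univ_inter, W.isClosed.closure_eq]
    _ = Order.height p := by
        rw [← Order.height_toDual,
          ← Order.height_orderIso (PrimeSpectrum.pointsEquivIrreducibleCloseds R) p]
        rfl

lemma dense_compl_of_forall_not_isMin {A : Set (PrimeSpectrum R)} (hA : ∀ p ∈ A, ¬ IsMin p) :
    Dense Aᶜ := by
  intro x
  obtain ⟨q, hq, hqx⟩ := Ideal.exists_minimalPrimes_le (J := x.asIdeal) bot_le
  have hqA : (⟨q, hq.1.1⟩ : PrimeSpectrum R) ∈ Aᶜ := fun h ↦ hA _ h (isMin_iff.mpr hq)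
  exact ((le_iff_specializes _ x).mp hqx).mem_closed isClosed_closure (subset_closure hqA)

variable [IsNoetherianRing R]

lemma exists_le_not_vanishingIdeal_le {C D : Set (PrimeSpectrum R)} (hC : IsOpen C)
    (hCD : Disjoint C (closure D)) {p : PrimeSpectrum R} (hp : p ∈ closure C) :
    ∃ q ≤ p, ¬ vanishingIdeal D ≤ q.asIdeal := by
  obtain ⟨c, hc, hcp⟩ := hC.exists_mem_specializes_of_mem_closure hp
  refine ⟨c, (le_iff_specializes c p).mpr hcp, fun h ↦ Set.disjoint_left.mp hCD hc ?_⟩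
  rw [← zeroLocus_vanishingIdeal_eq_closure]
  exact (mem_zeroLocus c _).mpr h

theorem ringDepth_atPrime_le_one_of_mul_le_nilradical {I₁ I₂ : Ideal R} {p : PrimeSpectrum R}
    (h₁₂ : I₁ * I₂ ≤ nilradical R) (hp : p.asIdeal ∈ (I₁ ⊔ I₂).minimalPrimes)
    (h₁ : ∃ q ≤ p, ¬ I₁ ≤ q.asIdeal) (h₂ : ∃ q ≤ p, ¬ I₂ ≤ q.asIdeal) :
    ringDepth (Localization.AtPrime p.asIdeal) ≤ 1 := by
  let Rₚ := Localization.AtPrime p.asIdeal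
  have hnil {I : Ideal R} (h : ∃ q ≤ p, ¬ I ≤ q.asIdeal) :
      ¬ I.map (algebraMap R Rₚ) ≤ nilradical Rₚ := by
    obtain ⟨q, hqp, hIq⟩ := h
    have := Ideal.isPrime_map_of_isLocalizationAtPrime p.asIdeal (S := Rₚ) hqp
    refine fun hI ↦ hIq ?_
    rw [← Ideal.under_map_of_isLocalizationAtPrime p.asIdeal (S := Rₚ) hqp]
    exact Ideal.le_comap_of_map_le (hI.trans (nilradical_le_prime _))
  refine ringDepth_le_one_of_mul_le_nilradical ?_ ?_ (hnil h₁) (hnil h₂)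
  · rw [← Ideal.map_mul]
    refine (Ideal.map_mono h₁₂).trans ?_
    simpa [nilradical] using Ideal.map_radical_le (algebraMap R Rₚ) (I := ⊥)
  · rw [← Ideal.map_sup, IsLocalization.AtPrime.radical_map_of_mem_minimalPrimes _ _ _ hp,
      Localization.AtPrime.map_eq_maximalIdeal]

theorem exists_mem_ringDepth_le_one_of_not_isPreconnected_compl
    [PreconnectedSpace (PrimeSpectrum R)] {A : Set (PrimeSpectrum R)} (hA : IsClosed A)
    (hdense : Dense Aᶜ) (hdisc : ¬ IsPreconnected Aᶜ) :
    ∃ p ∈ A, ringDepth (Localization.AtPrime p.asIdeal) ≤ 1 := by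
  simp only [IsPreconnected, not_forall, exists_prop] at hdisc
  obtain ⟨u, v, hu, hv, hcover, hAu, hAv, huv⟩ := hdisc
  set C₁ := Aᶜ ∩ u
  set C₂ := Aᶜ ∩ v
  have hC₁ : IsOpen C₁ := hA.isOpen_compl.inter hu
  have hC₂ : IsOpen C₂ := hA.isOpen_compl.inter hv
  have hC₁₂ : Disjoint C₁ C₂ := Set.disjoint_left.mpr fun x h₁ h₂ ↦ huv ⟨x, h₁.1, h₁.2, h₂.2⟩
  have hunion : closure C₁ ∪ closure C₂ = Set.univ := by
    rw [← closure_union, ← Set.inter_union_distrib_left, Set.inter_eq_left.mpr hcover,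
      hdense.closure_eq]
  obtain ⟨z, -, hz₁, hz₂⟩ := isPreconnected_closed_iff.mp isPreconnected_univ _ _
    isClosed_closure isClosed_closure hunion.ge (by simpa using hAu.mono subset_closure)
    (by simpa using hAv.mono subset_closure)
  simp only [← zeroLocus_vanishingIdeal_eq_closure] at hunion hz₁ hz₂
  obtain ⟨P, hP, -⟩ := Ideal.exists_minimalPrimes_le (J := z.asIdeal) (sup_le hz₁ hz₂)
  let p : PrimeSpectrum R := ⟨P, hP.1.1⟩
  have hp₁ : p ∈ closure C₁ := by
    rw [← zeroLocus_vanishingIdeal_eq_closure]; exact le_sup_left.trans hP.1.2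
  have hp₂ : p ∈ closure C₂ := by
    rw [← zeroLocus_vanishingIdeal_eq_closure]; exact le_sup_right.trans hP.1.2
  have hpA : p ∈ A := by
    by_contra hpA
    rcases hcover hpA with hpu | hpv
    · exact Set.disjoint_left.mp (hC₁₂.closure_right hC₁) ⟨hpA, hpu⟩ hp₂
    · exact Set.disjoint_right.mp (hC₁₂.closure_left hC₂) ⟨hpA, hpv⟩ hp₁
  refine ⟨p, hpA, ringDepth_atPrime_le_one_of_mul_le_nilradical ?_ hP
    (exists_le_not_vanishingIdeal_le hC₂ (hC₁₂.closure_left hC₂).symm hp₂)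
    (exists_le_not_vanishingIdeal_le hC₁ (hC₁₂.closure_right hC₁) hp₁)⟩
  rw [← SetLike.coe_subset_coe, ← zeroLocus_eq_univ_iff, zeroLocus_mul]
  exact hunion

end PrimeSpectrum

/-- **Hartshorne's Connectedness Theorem.** Let `R` be a Noetherian ring and
`k ∈ ℕ`. If `Spec R` is connected and `depth R_p ≥ 2` for every prime `p` with
`dim R_p > k`, then `Spec R` is connected in codimension `k`. -/
theorem spec_connectedInCodim_of_depth_ge_two
    (R : Type*) [CommRing R] [IsNoetherianRing R] (k : ℕ)
    (hconn : ConnectedSpace (PrimeSpectrum R))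
    (hdepth : ∀ p : PrimeSpectrum R,
      (k : WithBot ℕ∞) < ringKrullDim (Localization.AtPrime p.asIdeal) →
      2 ≤ ringDepth (Localization.AtPrime p.asIdeal)) :
    ConnectedInCodim (Set.univ : Set (PrimeSpectrum R)) (k : ℕ∞) := by
  intro A hA hcodim
  have hheight (p : PrimeSpectrum R) (hp : p ∈ A) : (k : ℕ∞) < Order.height p :=
    hcodim.trans_le (codimIn_univ_le_height hA hp)
  have hdense : Dense Aᶜ := dense_compl_of_forall_not_isMin fun p hp hmin ↦ by
    simpa [Order.height_eq_zero.mpr hmin] using hheight p hp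
  rw [← Set.compl_eq_univ_sdiff]
  refine ⟨hdense.nonempty, ?_⟩
  by_contra hdisc
  obtain ⟨p, hpA, hp⟩ := exists_mem_ringDepth_le_one_of_not_isPreconnected_compl hA hdense hdisc
  have hdim : (k : WithBot ℕ∞) < ringKrullDim (Localization.AtPrime p.asIdeal) := by
    rw [IsLocalization.AtPrime.ringKrullDim_eq_height p.asIdeal,
      PrimeSpectrum.height_eq_orderHeight]
    exact_mod_cast hheight p hpA
  exact absurd ((hdepth p hdim).trans hp) (by norm_num)
end

section
/- Let X = X_1 ∪ … ∪ X_r be the decomposition of X into irreducible components. Then for every index i and every σ ∈ G, the set H_{σ,i} := {(x, σx) : x ∈ X_i} ⊆ X × X is an irreducible component of the separating variety V_sep, and V_sep is the union of all the sets H_{σ,i}. -/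
open TopologicalSpace

variable {K : Type*} [Field K]

/-- The Zariski topology on affine space `σ → K`. -/
instance zariskiTopology (σ : Type*) : TopologicalSpace (σ → K) :=
  .generateFrom {U | ∃ I : Ideal (MvPolynomial σ K), U = (MvPolynomial.zeroLocus K I)ᶜ}

variable {m : ℕ}

/-- `f : X → K` is a regular function on `X` (the restriction of a polynomial). -/
def IsRegularFn (X : Set (Fin m → K)) (f : ↥X → K) : Prop :=
  ∃ p : MvPolynomial (Fin m) K, ∀ x : ↥X, f x = MvPolynomial.eval (x : Fin m → K) p

variable (G : Type*) [Group G]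

/-- The `G`-action on `X` is by morphisms (hence automorphisms) of varieties. -/
def IsRegularAction (X : Set (Fin m → K)) [MulAction G ↥X] : Prop :=
  ∀ (σ : G) (i : Fin m), IsRegularFn X (fun x => ((σ • x : ↥X) : Fin m → K) i)

/-- `f : X → K` is a `G`-invariant function. -/
def IsInvariantFn (X : Set (Fin m → K)) [MulAction G ↥X] (f : ↥X → K) : Prop :=
  ∀ (σ : G) (x : ↥X), f (σ • x) = f x

/-- The separating variety `V_sep ⊆ X × X`, inside `K^m × K^m 'K^{m ⊕ m}`. -/
def sepVariety (X : Set (Fin m → K)) [MulAction G ↥X] : Set ((Fin m ⊕ Fin m) → K) :=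
  {z | ∃ x y : ↥X, z = Sum.elim (x : Fin m → K) (y : Fin m → K) ∧
    ∀ f : ↥X → K, IsRegularFn X f → IsInvariantFn G X f → f x = f y}

/-- `X × X` inside `K^{m ⊕ m}`. -/
def prodXX (X : Set (Fin m → K)) : Set ((Fin m ⊕ Fin m) → K) :=
  {z | ∃ x ∈ X, ∃ y ∈ X, z = Sum.elim x y}

/-- The graph `H_{σ,Y} = {(x, σx) | x ∈ Y}` of `σ` over a subset `Y ⊆ X`. -/
def graphComp (X : Set (Fin m → K)) [MulAction G ↥X] (σ : G) (Y : Set (Fin m → K)) :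
    Set ((Fin m ⊕ Fin m) → K) :=
  {z | ∃ x : ↥X, (x : Fin m → K) ∈ Y ∧
    z = Sum.elim (x : Fin m → K) ((σ • x : ↥X) : Fin m → K)}

/-- The fixed-point set `X^σ`, as a subset of the ambient affine space. -/
def fixedPts (X : Set (Fin m → K)) [MulAction G ↥X] (σ : G) : Set (Fin m → K) :=
  {v | ∃ h : v ∈ X, σ • (⟨v, h⟩ : ↥X) = ⟨v, h⟩}

/-- A set `S` of functions on `X` separates as well as all invariants do. -/
def IsSeparating (X : Set (Fin m → K)) [MulAction G ↥X] (S : Set (↥X → K)) : Prop :=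
  ∀ x y : ↥X, (∃ f : ↥X → K, IsRegularFn X f ∧ IsInvariantFn G X f ∧ f x ≠ f y) →
    ∃ g ∈ S, g x ≠ g y

/-- A regular (polynomial) map between algebraic sets. -/
def IsRegularMap {α β : Type*} (A : Set (α → K)) (B : Set (β → K)) (φ : ↥A → ↥B) : Prop :=
  ∀ j : β, ∃ p : MvPolynomial α K, ∀ x : ↥A, (φ x : β → K) j = MvPolynomial.eval (x : α → K) p

/-- Isomorphism of algebraic sets (mutually inverse regular maps). -/
def VarIso {α β : Type*} (A : Set (α → K)) (B : Set (β → K)) : Prop :=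
  ∃ (φ : ↥A → ↥B) (ψ : ↥B → ↥A), IsRegularMap A B φ ∧ IsRegularMap B A ψ ∧
    Function.LeftInverse ψ φ ∧ Function.RightInverse ψ φ

/-!
Invariants of a finite group separate orbits: if `y ∉ G • x`, a polynomial `p` equal to `1` at
`y` and vanishing on `G • x` yields the invariant `∏ σ, (1 - p ∘ σ)`, which is `1` at `x` and `0`
at `y`.
Hence `V_sep` is the finite union of the graphs `{(x, σ x) | x ∈ X}`, each contained in the closed
graph of a polynomial map. The graph of `σ` over a component `Z` is irreducible, being a polynomial
image of `Z`. An irreducible `S ⊆ V_sep` containing it lies in the graph of a single `τ`; the first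
projection of `S` is irreducible in `X` and contains `Z`, so equals `Z`, and then `σ = τ` on `Z`
forces `S` to be the graph of `σ` over `Z`.
-/

open MvPolynomial Set

section Zariski

variable {α β : Type*}

theorem MvPolynomial.eval_bind₁ (v : α → K) (P : β → MvPolynomial α K) (f : MvPolynomial β K) :
    eval v (bind₁ P f) = eval (fun j => eval v (P j)) f :=
  eval₂Hom_bind₁ (RingHom.id K) v P f

theorem isClosed_zeroLocus (I : Ideal (MvPolynomial α K)) : IsClosed (zeroLocus K I) :=
  isOpen_compl_iff.mp <| isOpen_generateFrom_of_mem ⟨I, rfl⟩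

theorem continuous_eval_polys (P : β → MvPolynomial α K) :
    Continuous fun v : α → K => fun j => eval v (P j) := by
  refine continuous_generateFrom_iff.mpr ?_
  rintro _ ⟨I, rfl⟩
  suffices (fun v : α → K => fun j => eval v (P j)) ⁻¹' zeroLocus K I =
      zeroLocus K (Ideal.span (bind₁ P '' I)) by
    rw [preimage_compl, this]
    exact isOpen_generateFrom_of_mem ⟨_, rfl⟩
  ext v
  simp [zeroLocus_span, eval_bind₁]

noncomputable def polyGraph (P : β → MvPolynomial α K) (v : α → K) : α ⊕ β → K :=
  Sum.elim v fun j => eval v (P j)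

theorem continuous_polyGraph (P : β → MvPolynomial α K) : Continuous (polyGraph P) := by
  convert continuous_eval_polys (Sum.elim X P) using 2 with v
  ext (j | j) <;> simp [polyGraph]

theorem isClosed_range_polyGraph (P : β → MvPolynomial α K) :
    IsClosed (range (polyGraph P)) := by
  convert isClosed_zeroLocus
    (Ideal.span (range fun j => X (Sum.inr j) - rename Sum.inl (P j)) :
      Ideal (MvPolynomial (α ⊕ β) K))
  ext z
  rw [zeroLocus_span]
  simp only [Set.mem_ofPred_eq, forall_mem_range, aeval_eq_eval, map_sub, eval_X, eval_rename,
    sub_eq_zero]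
  constructor
  · rintro ⟨v, rfl⟩ j
    rfl
  · intro h
    exact ⟨z ∘ Sum.inl, funext fun | .inl _ => rfl | .inr j => (h j).symm⟩

theorem continuous_comp_inl : Continuous fun z : α ⊕ β → K => z ∘ Sum.inl := by
  simpa [Function.comp_def] using
    continuous_eval_polys (K := K) (fun i : α => X (Sum.inl i) : α → MvPolynomial (α ⊕ β) K)

end Zariski

theorem MvPolynomial.exists_eval_eq_one_forall_eval_eq_zero {α : Type*} {a : α → K}
    {B : Finset (α → K)} (ha : a ∉ B) :
    ∃ p : MvPolynomial α K, eval a p = 1 ∧ ∀ b ∈ B, eval b p = 0 := by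
  have hlinear : ∀ b ∈ B, ∃ q : MvPolynomial α K, eval a q = 1 ∧ eval b q = 0 := by
    intro b hb
    obtain ⟨i, hi⟩ := Function.ne_iff.mp (ne_of_mem_of_not_mem hb ha).symm
    exact ⟨C (a i - b i)⁻¹ * (X i - C (b i)), by simp [sub_ne_zero.mpr hi], by simp⟩
  choose q hqa hqb using hlinear
  refine ⟨∏ b ∈ B.attach, q b.1 b.2, ?_, fun b hb => ?_⟩
  · simp [hqa]
  · rw [map_prod]
    exact Finset.prod_eq_zero (Finset.mem_attach _ ⟨b, hb⟩) (hqb b hb)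

theorem isRegularFn_prod {X : Set (Fin m → K)} {ι : Type*} [Fintype ι] {f : ι → X → K}
    (hf : ∀ i, IsRegularFn X (f i)) : IsRegularFn X fun x => ∏ i, f i x := by
  choose p hp using hf
  exact ⟨∏ i, p i, fun x => by simp [hp]⟩

section Action

variable {G} {X : Set (Fin m → K)} [MulAction G X]

theorem isInvariantFn_prod_smul [Fintype G] (φ : X → K) :
    IsInvariantFn G X fun x => ∏ σ : G, φ (σ • x) := by
  intro τ x
  simp only [← mul_smul]
  exact Fintype.prod_equiv (Equiv.mulRight τ) _ _ fun _ => rfl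

namespace IsRegularAction

noncomputable def coordPoly (hact : IsRegularAction G X) (σ : G) (i : Fin m) :
    MvPolynomial (Fin m) K :=
  (hact σ i).choose

theorem coe_smul (hact : IsRegularAction G X) (σ : G) (x : X) :
    ((σ • x : X) : Fin m → K) = fun i => eval (x : Fin m → K) (hact.coordPoly σ i) :=
  funext fun i => (hact σ i).choose_spec x

theorem isRegularFn_eval_smul (hact : IsRegularAction G X) (σ : G)
    (p : MvPolynomial (Fin m) K) : IsRegularFn X fun x => eval ((σ • x : X) : Fin m → K) p :=
  ⟨bind₁ (hact.coordPoly σ) p, fun x => by simp only [eval_bind₁, hact.coe_smul]⟩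

theorem exists_smul_eq [Finite G] (hact : IsRegularAction G X) {x y : X}
    (h : ∀ f : X → K, IsRegularFn X f → IsInvariantFn G X f → f x = f y) :
    ∃ σ : G, σ • x = y := by
  classical
  have := Fintype.ofFinite G
  by_contra! hxy
  have hy : (y : Fin m → K) ∉ Finset.univ.image fun σ : G => ((σ • x : X) : Fin m → K) := by
    simp only [Finset.mem_image, Finset.mem_univ, true_and, not_exists]
    exact fun σ hσ => hxy σ (Subtype.ext hσ)
  obtain ⟨p, hpy, hpx⟩ := exists_eval_eq_one_forall_eval_eq_zero hy
  let f : X → K := fun v => ∏ σ : G, eval ((σ • v : X) : Fin m → K) (1 - p)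
  have hfx : f x = 1 := Finset.prod_eq_one fun σ _ => by
    simp [hpx _ (Finset.mem_image_of_mem _ (Finset.mem_univ σ))]
  have hfy : f y = 0 := Finset.prod_eq_zero (Finset.mem_univ 1) (by simp [hpy])
  have hreg : IsRegularFn X f := isRegularFn_prod fun σ => hact.isRegularFn_eval_smul σ (1 - p)
  have hinv : IsInvariantFn G X f :=
    isInvariantFn_prod_smul (G := G) (X := X) fun v => eval (v : Fin m → K) (1 - p)
  exact one_ne_zero (hfx.symm.trans ((h f hreg hinv).trans hfy))

end IsRegularAction

end Action

theorem IsIrreducible.preimage_val {α : Type*} [TopologicalSpace α] {X W : Set α}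
    (hW : IsIrreducible W) (hWX : W ⊆ X) : IsIrreducible (Subtype.val ⁻¹' W : Set X) := by
  obtain ⟨w, hw⟩ := hW.nonempty
  refine ⟨⟨⟨w, hWX hw⟩, hw⟩, ?_⟩
  rintro _ _ ⟨U, hU, rfl⟩ ⟨V, hV, rfl⟩ ⟨x, hxW, hxU⟩ ⟨y, hyW, hyV⟩
  obtain ⟨z, hzW, hzU, hzV⟩ := hW.2 U V hU hV ⟨x, hxW, hxU⟩ ⟨y, hyW, hyV⟩
  exact ⟨⟨z, hWX hzW⟩, hzW, hzU, hzV⟩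

theorem exists_isIrredCompOf_mem {α : Type*} [TopologicalSpace α] {X : Set α} {x : α}
    (hx : x ∈ X) : ∃ Z : Set α, IsIrredCompOf Z X ∧ x ∈ Z := by
  let C := irreducibleComponent (⟨x, hx⟩ : X)
  refine ⟨Subtype.val '' C, ⟨⟨image_subset_iff.mpr fun y _ => y.2, ?_⟩, ?_⟩,
    mem_image_of_mem _ mem_irreducibleComponent⟩
  · exact isIrreducible_irreducibleComponent.image _ continuous_subtype_val.continuousOn
  · rintro W ⟨hWX, hW⟩ hCW
    have hC : C = Subtype.val ⁻¹' W :=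
      (eq_irreducibleComponent (hW.preimage_val hWX).2 (image_subset_iff.mp hCW)).symm
    intro w hw
    exact ⟨⟨w, hWX hw⟩, hC ▸ hw, rfl⟩

theorem biUnion_isIrredCompOf {α : Type*} [TopologicalSpace α] (X : Set α) :
    ⋃ (Z : Set α) (_ : IsIrredCompOf Z X), Z = X := by
  refine subset_antisymm (iUnion₂_subset fun Z hZ => hZ.prop.1) fun x hx => ?_
  obtain ⟨Z, hZ, hxZ⟩ := exists_isIrredCompOf_mem hx
  exact mem_iUnion₂.mpr ⟨Z, hZ, hxZ⟩

section Graph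

variable {G} {F : Type*} {X : Set (Fin m → F)} [MulAction G X]

theorem graphComp_mono (σ : G) {W W' : Set (Fin m → F)} (h : W ⊆ W') :
    graphComp G X σ W ⊆ graphComp G X σ W' :=
  fun _ ⟨x, hx, hz⟩ => ⟨x, h hx, hz⟩

theorem graphComp_iUnion {ι : Sort*} (σ : G) (W : ι → Set (Fin m → F)) :
    graphComp G X σ (⋃ i, W i) = ⋃ i, graphComp G X σ (W i) := by
  ext z
  simp only [graphComp, mem_iUnion, Set.mem_ofPred_eq]
  exact ⟨fun ⟨x, ⟨i, hx⟩, hz⟩ => ⟨i, x, hx, hz⟩, fun ⟨i, x, hx, hz⟩ => ⟨x, ⟨i, hx⟩, hz⟩⟩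

theorem image_comp_inl_graphComp (σ : G) (W : Set (Fin m → F)) :
    (· ∘ Sum.inl) '' graphComp G X σ W = W ∩ X := by
  ext v
  constructor
  · rintro ⟨_, ⟨x, hx, rfl⟩, rfl⟩
    exact ⟨hx, x.2⟩
  · rintro ⟨hv, hvX⟩
    exact ⟨_, ⟨⟨v, hvX⟩, hv, rfl⟩, rfl⟩

theorem smul_eq_of_graphComp_subset {σ τ : G} {W : Set (Fin m → F)}
    (h : graphComp G X σ W ⊆ graphComp G X τ W) {x : X} (hx : (x : Fin m → F) ∈ W) :
    σ • x = τ • x := by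
  obtain ⟨x', -, hx'⟩ := h ⟨x, hx, rfl⟩
  obtain rfl : x = x' := Subtype.ext (funext fun i => congrFun hx' (Sum.inl i))
  exact Subtype.ext (funext fun i => congrFun hx' (Sum.inr i))

theorem graphComp_eq_of_subset {σ τ : G} {W : Set (Fin m → F)}
    (h : graphComp G X σ W ⊆ graphComp G X τ W) : graphComp G X σ W = graphComp G X τ W := by
  refine h.antisymm ?_
  rintro _ ⟨x, hx, rfl⟩
  exact ⟨x, hx, by rw [smul_eq_of_graphComp_subset h hx]⟩

end Graph

section SepVariety

variable {G} {X : Set (Fin m → K)} [MulAction G X]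

theorem image_comp_inl_sepVariety_subset : (· ∘ Sum.inl) '' sepVariety G X ⊆ X := by
  rintro _ ⟨_, ⟨x, y, rfl, -⟩, rfl⟩
  exact x.2

theorem graphComp_subset_sepVariety (σ : G) (W : Set (Fin m → K)) :
    graphComp G X σ W ⊆ sepVariety G X := by
  rintro _ ⟨x, -, rfl⟩
  exact ⟨x, σ • x, rfl, fun f _ hf => (hf σ x).symm⟩

namespace IsRegularAction

theorem sepVariety_eq_iUnion_graphComp [Finite G] (hact : IsRegularAction G X) :
    sepVariety G X = ⋃ σ : G, graphComp G X σ X := by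
  refine subset_antisymm ?_ (iUnion_subset fun σ => graphComp_subset_sepVariety σ X)
  rintro _ ⟨x, y, rfl, hxy⟩
  obtain ⟨σ, rfl⟩ := hact.exists_smul_eq hxy
  exact mem_iUnion.mpr ⟨σ, x, x.2, rfl⟩

theorem graphComp_eq_image (hact : IsRegularAction G X) (σ : G) {W : Set (Fin m → K)}
    (hWX : W ⊆ X) : graphComp G X σ W = polyGraph (hact.coordPoly σ) '' W := by
  ext z
  constructor
  · rintro ⟨x, hx, rfl⟩
    exact ⟨x, hx, by rw [polyGraph, hact.coe_smul]⟩
  · rintro ⟨v, hv, rfl⟩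
    exact ⟨⟨v, hWX hv⟩, hv, by rw [polyGraph, hact.coe_smul]⟩

theorem isIrreducible_graphComp (hact : IsRegularAction G X) (σ : G) {W : Set (Fin m → K)}
    (hWX : W ⊆ X) (hW : IsIrreducible W) : IsIrreducible (graphComp G X σ W) := by
  rw [hact.graphComp_eq_image σ hWX]
  exact hW.image _ (continuous_polyGraph _).continuousOn

/-- `V_sep` is covered by the finitely many closed sets `range (polyGraph (hact.coordPoly τ))`,
so an irreducible subset lies in one of them. -/
theorem exists_subset_graphComp [Finite G] (hact : IsRegularAction G X)
    {S : Set ((Fin m ⊕ Fin m) → K)} (hS : S ⊆ sepVariety G X) (hSirr : IsIrreducible S) :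
    ∃ τ : G, S ⊆ graphComp G X τ ((· ∘ Sum.inl) '' S) := by
  have hcover : S ⊆ ⋃ τ : G, range (polyGraph (hact.coordPoly τ)) := by
    refine hS.trans (hact.sepVariety_eq_iUnion_graphComp.trans_subset (iUnion_mono fun τ => ?_))
    rw [hact.graphComp_eq_image τ subset_rfl]
    exact image_subset_range _ _
  have hfin := finite_range fun τ : G => range (polyGraph (hact.coordPoly τ))
  obtain ⟨_, hτ, hSτ⟩ := isIrreducible_iff_sUnion_isClosed.mp hSirr hfin.toFinset
    (by simp [isClosed_range_polyGraph]) (by rwa [hfin.coe_toFinset, sUnion_range])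
  obtain ⟨τ, rfl⟩ := hfin.mem_toFinset.mp hτ
  have hπSX : (· ∘ Sum.inl) '' S ⊆ X := (image_mono hS).trans image_comp_inl_sepVariety_subset
  refine ⟨τ, fun z hz => ?_⟩
  obtain ⟨v, rfl⟩ := hSτ hz
  rw [hact.graphComp_eq_image τ hπSX]
  exact ⟨v, ⟨_, hz, rfl⟩, rfl⟩

theorem isIrredCompOf_graphComp [Finite G] (hact : IsRegularAction G X) (σ : G)
    {Z : Set (Fin m → K)} (hZ : IsIrredCompOf Z X) :
    IsIrredCompOf (graphComp G X σ Z) (sepVariety G X) := by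
  obtain ⟨⟨hZX, hZirr⟩, hZmax⟩ := hZ
  refine ⟨⟨graphComp_subset_sepVariety σ Z, hact.isIrreducible_graphComp σ hZX hZirr⟩, ?_⟩
  rintro S ⟨hS, hSirr⟩ hσS
  obtain ⟨τ, hSτ⟩ := hact.exists_subset_graphComp hS hSirr
  have hπS : (· ∘ Sum.inl) '' S ⊆ Z := by
    refine hZmax ⟨?_, hSirr.image _ continuous_comp_inl.continuousOn⟩ ?_
    · exact (image_mono hS).trans image_comp_inl_sepVariety_subset
    · calc Z = (· ∘ Sum.inl) '' graphComp G X σ Z := by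
            rw [image_comp_inl_graphComp, inter_eq_left.mpr hZX]
        _ ⊆ (· ∘ Sum.inl) '' S := image_mono hσS
  have hSZ := hSτ.trans (graphComp_mono τ hπS)
  rwa [← graphComp_eq_of_subset (hσS.trans hSZ)] at hSZ

end IsRegularAction

end SepVariety

theorem sepVariety_components_general {K : Type*} [Field K] {m : ℕ}
    (X : Set (Fin m → K))
    (G : Type*) [Group G] [Finite G] [MulAction G ↥X] (hact : IsRegularAction G X) :
    (∀ (σ : G) (Z : Set (Fin m → K)), IsIrredCompOf Z X →
      IsIrredCompOf (graphComp G X σ Z) (sepVariety G X)) ∧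
    sepVariety G X =
      ⋃ (σ : G), ⋃ (Z : Set (Fin m → K)) (_ : IsIrredCompOf Z X), graphComp G X σ Z := by
  refine ⟨fun σ Z hZ => hact.isIrredCompOf_graphComp σ hZ, ?_⟩
  rw [hact.sepVariety_eq_iUnion_graphComp]
  refine iUnion_congr fun σ => ?_
  rw [← congrArg (graphComp G X σ) (biUnion_isIrredCompOf X)]
  simp only [graphComp_iUnion]

/-- The irreducible components of the separating variety are exactly the graphs
`H_{σ,i} = {(x, σx) | x ∈ X_i}` for `σ ∈ G` and `X_i` an irreducible component
of `X`, and `V_sep` is the union of all of them. -/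
theorem sepVariety_components {K : Type*} [Field K] [IsAlgClosed K] {m : ℕ}
    (X : Set (Fin m → K)) (hX : IsClosed X)
    (G : Type*) [Group G] [Finite G] [MulAction G ↥X] (hact : IsRegularAction G X) :
    (∀ (σ : G) (Z : Set (Fin m → K)), IsIrredCompOf Z X →
      IsIrredCompOf (graphComp G X σ Z) (sepVariety G X)) ∧
    sepVariety G X =
      ⋃ (σ : G), ⋃ (Z : Set (Fin m → K)) (_ : IsIrredCompOf Z X), graphComp G X σ Z :=
  sepVariety_components_general X G hact
end

section
/- Let K be an algebraically closed field, G a finite group acting by automorphisms on an affine variety X over K, and A ⊆ K[X]^G a subalgebra such that K[X]^G is contained in the purely inseparable closure of A in K[X]^G (i.e., every invariant has some p^e-th power lying in A, where p = char K). Then any generating set of the K-algebra A is a separating set of invariants. -/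
open TopologicalSpace

variable {K : Type*} [Field K]

variable {m : ℕ}

variable (G : Type*) [Group G]

theorem apply_eq_apply_of_mem_adjoin {R B ι : Type*} [CommSemiring R] [Semiring B] [Algebra R B]
    {S : Set (ι → B)} {x y : ι} (h : ∀ g ∈ S, g x = g y) {a : ι → B}
    (ha : a ∈ Algebra.adjoin R S) : a x = a y :=
  Algebra.adjoin_le (S := AlgHom.equalizer (Pi.evalAlgHom R (fun _ ↦ B) x)
    (Pi.evalAlgHom R (fun _ ↦ B) y)) h ha

theorem exists_mem_apply_ne_of_pow_mem_adjoin {R B ι : Type*} [CommSemiring R] [CommRing B]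
    [IsReduced B] [Algebra R B] (p : ℕ) [ExpChar B p] {S : Set (ι → B)} {f : ι → B} {e : ℕ}
    (hf : f ^ p ^ e ∈ Algebra.adjoin R S) {x y : ι} (hne : f x ≠ f y) :
    ∃ g ∈ S, g x ≠ g y := by
  by_contra! h
  have hpow : f x ^ p ^ e = f y ^ p ^ e := by
    simpa only [Pi.pow_apply] using apply_eq_apply_of_mem_adjoin h hf
  exact hne (iterateFrobenius_inj B p e hpow)

theorem generating_set_separating_of_purely_inseparable_general
    {K : Type*} [Field K] (p : ℕ) [Fact p.Prime] [CharP K p] {m : ℕ}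
    (X : Set (Fin m → K))
    (G : Type*) [Group G] [MulAction G ↥X]
    (A : Subalgebra K (↥X → K))
    (hins : ∀ f : ↥X → K, IsRegularFn X f → IsInvariantFn G X f →
      ∃ e : ℕ, f ^ (p ^ e) ∈ A)
    (S : Set (↥X → K)) (hS : Algebra.adjoin K S = A) :
    IsSeparating G X S := by
  rintro x y ⟨f, hreg, hinv, hne⟩
  obtain ⟨e, hfA⟩ := hins f hreg hinv
  exact exists_mem_apply_ne_of_pow_mem_adjoin p (hS ▸ hfA) hne

/-- If `A ⊆ K[X]^G` is a subalgebra such that every invariant has some `p^e`-th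
power lying in `A` (purely inseparable closure condition), then every
generating set of the `K`-algebra `A` is a separating set. -/
theorem generating_set_separating_of_purely_inseparable
    {K : Type*} [Field K] [IsAlgClosed K] (p : ℕ) [Fact p.Prime] [CharP K p] {m : ℕ}
    (X : Set (Fin m → K)) (hX : IsClosed X)
    (G : Type*) [Group G] [Finite G] [MulAction G ↥X] (hact : IsRegularAction G X)
    (A : Subalgebra K (↥X → K))
    (hAinv : ∀ a ∈ A, IsRegularFn X a ∧ IsInvariantFn G X a)
    (hins : ∀ f : ↥X → K, IsRegularFn X f → IsInvariantFn G X f →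
      ∃ e : ℕ, f ^ (p ^ e) ∈ A)
    (S : Set (↥X → K)) (hS : Algebra.adjoin K S = A) :
    IsSeparating G X S :=
  generating_set_separating_of_purely_inseparable_general p X G A hins S hS
end
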